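/- Let ω = Σ_i ω̃_i δx^i + Σ_i ω_i δy^i be a 1-form on E (with smooth coefficients ω̃_i, ω_i; note i_Sω = 0). Then ω is a dual symmetry of S, i.e., L_Sω = 0, if and only if ω̃_i = −(∇ω)_i for all i and the Jacobi equation (∇(∇ω))_i + Σ_j R^j_i ω_j = 0 holds for all i. -/

import Mathlib

noncomputable section

/-- The local model `E = ℝ × (Fin n → ℝ) × (Fin n → ℝ)` of the first jet bundle `J¹π`,
with coordinates `(t, xⁱ, yⁱ)`.  Tangent vectors at a point are identified with
elements of `E n` itself. -/
abbrev E (n : ℕ) : Type := ℝ × (Fin n → ℝ) × (Fin n → ℝ)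

variable {n : ℕ}

/-- A map between normed spaces is `C^∞`-smooth. -/
def Cinf {α β : Type*} [NormedAddCommGroup α] [NormedSpace ℝ α]
    [NormedAddCommGroup β] [NormedSpace ℝ β] (f : α → β) : Prop :=
  ContDiff ℝ (⊤ : ℕ∞) f

/-- A tangent vector having only a `y`-component. -/
def ypart (w : Fin n → ℝ) : E n := (0, 0, w)

/-- The coordinate vector `∂/∂yⁱ`. -/
def pdy (i : Fin n) : E n := ypart (Pi.single i 1)

/-- The coordinate vector `∂/∂xⁱ`. -/
def pdx (i : Fin n) : E n := (0, Pi.single i 1, 0)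

/-- Action of a vector field `X` on a function `f`: `X(f)(p) = df_p(X(p))`. -/
def vfd (X : E n → E n) (f : E n → ℝ) : E n → ℝ := fun p => fderiv ℝ f p (X p)

/-- Lie bracket of vector fields on `E n`. -/
def lieb (X Y : E n → E n) : E n → E n :=
  fun p => fderiv ℝ Y p (X p) - fderiv ℝ X p (Y p)

/-- The semispray `S = ∂/∂t + Σ yⁱ ∂/∂xⁱ − 2 Σ Gⁱ ∂/∂yⁱ` associated to `G`. -/
def Ssp (G : E n → Fin n → ℝ) : E n → E n := fun p => (1, p.2.2, fun i => -(2 * G p i))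

/-- Nonlinear connection coefficients `Nⁱⱼ = ∂Gⁱ/∂yʲ`. -/
def Nc (G : E n → Fin n → ℝ) (i j : Fin n) : E n → ℝ :=
  fun p => fderiv ℝ (fun q => G q i) p (pdy j)

/-- `Nⁱ₀ = 2Gⁱ − Σⱼ Nⁱⱼ yʲ`. -/
def N0c (G : E n → Fin n → ℝ) (i : Fin n) : E n → ℝ :=
  fun p => 2 * G p i - ∑ j, Nc G i j p * p.2.2 j

/-- The horizontal vector field `δ/δxⁱ = ∂/∂xⁱ − Σⱼ Nʲᵢ ∂/∂yʲ`. -/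
def ddx (G : E n → Fin n → ℝ) (i : Fin n) : E n → E n :=
  fun p => (0, Pi.single i 1, fun j => -(Nc G j i p))

/-- The contact 1-form `δxⁱ = dxⁱ − yⁱ dt`. -/
def dxi (i : Fin n) : E n → E n → ℝ := fun p w => w.2.1 i - p.2.2 i * w.1

/-- The 1-form `δyⁱ = dyⁱ + Σⱼ Nⁱⱼ dxʲ + Nⁱ₀ dt`. -/
def dyi (G : E n → Fin n → ℝ) (i : Fin n) : E n → E n → ℝ :=
  fun p w => w.2.2 i + (∑ j, Nc G i j p * w.2.1 j) + N0c G i p * w.1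

/-- The vertical endomorphism `J = Σᵢ ∂/∂yⁱ ⊗ δxⁱ`. -/
def Jv : E n → E n → E n := fun p w => ypart (fun i => dxi i p w)

/-- The horizontal projector `h = S ⊗ dt + Σᵢ δ/δxⁱ ⊗ δxⁱ`. -/
def hv (G : E n → Fin n → ℝ) : E n → E n → E n :=
  fun p w => w.1 • Ssp G p + ∑ i, dxi i p w • ddx G i p

/-- Jacobi endomorphism components `Rⁱⱼ = 2 ∂Gⁱ/∂xʲ − Σₖ Nⁱₖ Nᵏⱼ − S(Nⁱⱼ)`. -/
def Rjac (G : E n → Fin n → ℝ) (i j : Fin n) : E n → ℝ := fun p =>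
  2 * fderiv ℝ (fun q => G q i) p (pdx j) - (∑ k, Nc G i k p * Nc G k j p)
    - vfd (Ssp G) (Nc G i j) p

/-- Curvature components `Rⁱⱼₖ = (δ/δxᵏ)(Nⁱⱼ) − (δ/δxʲ)(Nⁱₖ)`. -/
def Rcur (G : E n → Fin n → ℝ) (i j k : Fin n) : E n → ℝ := fun p =>
  fderiv ℝ (Nc G i j) p (ddx G k p) - fderiv ℝ (Nc G i k) p (ddx G j p)

/-- The Jacobi endomorphism `Φ = Σᵢⱼ Rʲᵢ ∂/∂yʲ ⊗ δxⁱ`. -/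
def Phi (G : E n → Fin n → ℝ) : E n → E n → E n :=
  fun p w => ypart (fun j => ∑ i, Rjac G j i p * dxi i p w)

/-- The tensor `Ψ = Σᵢ δ/δxⁱ ⊗ δyⁱ − Σᵢⱼ Rʲᵢ ∂/∂yʲ ⊗ δxⁱ`. -/
def Psi (G : E n → Fin n → ℝ) : E n → E n → E n :=
  fun p w => (∑ i, dyi G i p w • ddx G i p) - Phi G p w

/-- Lie derivative of a 1-form `θ` along `X`, evaluated on a vector field `Y`:
`(L_Xθ)(Y) = X(θ(Y)) − θ([X,Y])`. -/
def lieD (X : E n → E n) (θ : E n → E n → ℝ) (Y : E n → E n) : E n → ℝ :=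
  fun p => fderiv ℝ (fun q => θ q (Y q)) p (X p) - θ p (lieb X Y p)

/-- Exterior derivative of a 1-form: `dθ(X,Y) = X(θ(Y)) − Y(θ(X)) − θ([X,Y])`. -/
def extD (θ : E n → E n → ℝ) (X Y : E n → E n) : E n → ℝ :=
  fun p => fderiv ℝ (fun q => θ q (Y q)) p (X p) - fderiv ℝ (fun q => θ q (X q)) p (Y p)
    - θ p (lieb X Y p)

/-- Exterior derivative of a 1-form given as an operator on vector fields. -/
def extDop (α : (E n → E n) → E n → ℝ) (X Y : E n → E n) : E n → ℝ :=
  fun p => fderiv ℝ (α Y) p (X p) - fderiv ℝ (α X) p (Y p) - α (lieb X Y) p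

/-- The semi-basic 1-form `θ₀ dt + Σᵢ θᵢ δxⁱ`. -/
def sbform (θ0 : E n → ℝ) (θc : Fin n → E n → ℝ) : E n → E n → ℝ :=
  fun p w => θ0 p * w.1 + ∑ i, θc i p * dxi i p w

/-- `d_Jθ(X,Y) = dθ(JX,Y) + dθ(X,JY)` for a semi-basic 1-form `θ`. -/
def dJf (θ : E n → E n → ℝ) (X Y : E n → E n) : E n → ℝ :=
  fun p => extD θ (fun q => Jv q (X q)) Y p + extD θ X (fun q => Jv q (Y q)) p

/-- `d_hθ(X,Y) = dθ(hX,Y) + dθ(X,hY) − dθ(X,Y)` for a semi-basic 1-form `θ`. -/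
def dhf (G : E n → Fin n → ℝ) (θ : E n → E n → ℝ) (X Y : E n → E n) : E n → ℝ :=
  fun p => extD θ (fun q => hv G q (X q)) Y p + extD θ X (fun q => hv G q (Y q)) p
    - extD θ X Y p

/-- `d_Φθ(X,Y) = dθ(ΦX,Y) + dθ(X,ΦY)` for a semi-basic 1-form `θ`. -/
def dPhif (G : E n → Fin n → ℝ) (θ : E n → E n → ℝ) (X Y : E n → E n) : E n → ℝ :=
  fun p => extD θ (fun q => Phi G q (X q)) Y p + extD θ X (fun q => Phi G q (Y q)) p

/-- Lie derivative of the 2-form `dθ` along a vector field `SS`: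
`(L_S dθ)(X,Y) = S(dθ(X,Y)) − dθ([S,X],Y) − dθ(X,[S,Y])`. -/
def lieD2 (SS : E n → E n) (θ : E n → E n → ℝ) (X Y : E n → E n) : E n → ℝ :=
  fun p => fderiv ℝ (extD θ X Y) p (SS p) - extD θ (lieb SS X) Y p - extD θ X (lieb SS Y) p

/-- `∇dθ = L_S(dθ) − i_Ψ(dθ)`. -/
def nabD (G : E n → Fin n → ℝ) (θ : E n → E n → ℝ) (X Y : E n → E n) : E n → ℝ :=
  fun p => lieD2 (Ssp G) θ X Y p
    - (extD θ (fun q => Psi G q (X q)) Y p + extD θ X (fun q => Psi G q (Y q)) p)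

/-- The dynamical covariant derivative of an `n`-tuple of functions:
`(∇f)ᵢ = S(fᵢ) − Σⱼ Nʲᵢ fⱼ`. -/
def covd (G : E n → Fin n → ℝ) (f : Fin n → E n → ℝ) : Fin n → E n → ℝ :=
  fun i p => vfd (Ssp G) (f i) p - ∑ j, Nc G j i p * f j p

/-!
At each point, `L_Sω` is the covector `v ↦ (dω(S))(v) + ω(dS(v))`, so the condition on all
vector fields reduces to one on the frame `S, ∂/∂xᵏ, ∂/∂yᵏ`. On `S` it holds automatically,
since `ω(S) = 0` identically. On `∂/∂yᵏ` the covector takes the value `ω̃ₖ + (∇ω)ₖ`, and on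
`∂/∂xᵏ` the value `S(ω̃ₖ + (∇ω)ₖ) − ((∇∇ω)ₖ + Σⱼ Rʲₖ ωⱼ)`.
-/

section Smoothness

variable {G : E n → Fin n → ℝ}

lemma Cinf.differentiable {α β : Type*} [NormedAddCommGroup α] [NormedSpace ℝ α]
    [NormedAddCommGroup β] [NormedSpace ℝ β] {f : α → β} (h : Cinf f) :
    Differentiable ℝ f :=
  ContDiff.differentiable h (by simp)

lemma Cinf.fderiv_apply {α β : Type*} [NormedAddCommGroup α] [NormedSpace ℝ α]
    [NormedAddCommGroup β] [NormedSpace ℝ β] {f : α → β} (hf : Cinf f) {V : α → α}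
    (hV : Cinf V) : Cinf fun q => fderiv ℝ f q (V q) :=
  ContDiff.clm_apply (contDiff_infty_iff_fderiv.mp hf).2 hV

lemma cinf_Ssp (hG : Cinf G) : Cinf (Ssp G) :=
  contDiff_const.prodMk ((contDiff_snd.comp contDiff_snd).prodMk
    (contDiff_pi.mpr fun i => (contDiff_const.mul (contDiff_pi.mp hG i)).neg))

lemma cinf_Nc (hG : Cinf G) (i j : Fin n) : Cinf (Nc G i j) :=
  Cinf.fderiv_apply (contDiff_pi.mp hG i) contDiff_const

lemma cinf_N0c (hG : Cinf G) (i : Fin n) : Cinf (N0c G i) :=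
  (contDiff_const.mul (contDiff_pi.mp hG i)).sub <| ContDiff.sum fun j _ =>
    (cinf_Nc hG i j).mul (contDiff_pi.mp (contDiff_snd.comp contDiff_snd) j)

lemma cinf_covd (hG : Cinf G) {f : Fin n → E n → ℝ} (hf : ∀ i, Cinf (f i)) (i : Fin n) :
    Cinf (covd G f i) :=
  (Cinf.fderiv_apply (hf i) (cinf_Ssp hG)).sub
    (ContDiff.sum fun j _ => (cinf_Nc hG j i).mul (hf j))

end Smoothness

section VectorFieldAction

variable {X : E n → E n} {f g : E n → ℝ} {p : E n}

lemma vfd_add (hf : DifferentiableAt ℝ f p) (hg : DifferentiableAt ℝ g p) :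
    vfd X (fun q => f q + g q) p = vfd X f p + vfd X g p := by
  simp only [vfd, fderiv_fun_add hf hg, add_apply]

lemma vfd_mul (hf : DifferentiableAt ℝ f p) (hg : DifferentiableAt ℝ g p) :
    vfd X (fun q => f q * g q) p = vfd X f p * g p + f p * vfd X g p := by
  simp only [vfd, fderiv_fun_mul hf hg, add_apply, smul_apply, smul_eq_mul]
  ring

lemma vfd_sum {f : Fin n → E n → ℝ} (hf : ∀ i, DifferentiableAt ℝ (f i) p) :
    vfd X (fun q => ∑ i, f i q) p = ∑ i, vfd X (f i) p := by
  simp only [vfd, fderiv_fun_sum fun i _ => hf i, sum_apply]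

end VectorFieldAction

section OneForm

def dtCLM : E n →L[ℝ] ℝ := ContinuousLinearMap.fst ℝ ℝ ((Fin n → ℝ) × (Fin n → ℝ))

def dxCLM (i : Fin n) : E n →L[ℝ] ℝ :=
  (ContinuousLinearMap.proj i).comp ((ContinuousLinearMap.fst ℝ (Fin n → ℝ) (Fin n → ℝ)).comp
    (ContinuousLinearMap.snd ℝ ℝ ((Fin n → ℝ) × (Fin n → ℝ))))

def dyCLM (i : Fin n) : E n →L[ℝ] ℝ :=
  (ContinuousLinearMap.proj i).comp ((ContinuousLinearMap.snd ℝ (Fin n → ℝ) (Fin n → ℝ)).comp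
    (ContinuousLinearMap.snd ℝ ℝ ((Fin n → ℝ) × (Fin n → ℝ))))

@[simp] lemma dtCLM_apply (w : E n) : dtCLM w = w.1 := rfl
@[simp] lemma dxCLM_apply (i : Fin n) (w : E n) : dxCLM i w = w.2.1 i := rfl
@[simp] lemma dyCLM_apply (i : Fin n) (w : E n) : dyCLM i w = w.2.2 i := rfl

def oneForm (G : E n → Fin n → ℝ) (ωt ωc : Fin n → E n → ℝ) : E n → E n →L[ℝ] ℝ := fun q =>
  (∑ i, ωt i q • (dxCLM i - q.2.2 i • dtCLM)) +
    ∑ i, ωc i q • ((dyCLM i + ∑ j, Nc G i j q • dxCLM j) + N0c G i q • dtCLM)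

variable {G : E n → Fin n → ℝ} {ωt ωc : Fin n → E n → ℝ}

lemma oneForm_apply (q w : E n) :
    oneForm G ωt ωc q w = (∑ i, ωt i q * dxi i q w) + ∑ i, ωc i q * dyi G i q w := by
  simp [oneForm, dxi, dyi, mul_add]

lemma cinf_oneForm (hG : Cinf G) (hωt : ∀ i, Cinf (ωt i)) (hωc : ∀ i, Cinf (ωc i)) :
    Cinf (oneForm G ωt ωc) := by
  have hy : ∀ i, Cinf fun q : E n => q.2.2 i := contDiff_pi.mp (contDiff_snd.comp contDiff_snd)
  refine ContDiff.add (ContDiff.sum fun i _ => (hωt i).smul ?_)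
    (ContDiff.sum fun i _ => (hωc i).smul ?_)
  · exact contDiff_const.sub ((hy i).smul contDiff_const)
  · exact (contDiff_const.add (ContDiff.sum fun j _ => (cinf_Nc hG i j).smul contDiff_const)).add
      ((cinf_N0c hG i).smul contDiff_const)

lemma oneForm_Ssp (p : E n) : oneForm G ωt ωc p (Ssp G p) = 0 := by
  simp [oneForm_apply, dxi, dyi, Ssp, N0c]

lemma oneForm_ypart (p : E n) (w : Fin n → ℝ) :
    oneForm G ωt ωc p (ypart w) = ∑ i, ωc i p * w i := by
  simp [oneForm_apply, dxi, dyi, ypart]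

lemma oneForm_pdy (p : E n) (k : Fin n) : oneForm G ωt ωc p (pdy k) = ωc k p := by
  simp [pdy, oneForm_ypart, Pi.single_apply]

lemma oneForm_pdx (p : E n) (k : Fin n) :
    oneForm G ωt ωc p (pdx k) = ωt k p + ∑ i, ωc i p * Nc G i k p := by
  simp [oneForm_apply, dxi, dyi, pdx, Pi.single_apply]

end OneForm

section LieDerivative

def lieDerivAt (S : E n → E n) (Θ : E n → E n →L[ℝ] ℝ) (p : E n) : E n →L[ℝ] ℝ :=
  fderiv ℝ Θ p (S p) + (Θ p).comp (fderiv ℝ S p)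

variable {S : E n → E n} {Θ : E n → E n →L[ℝ] ℝ} {p : E n}

lemma lieD_eq_lieDerivAt {X : E n → E n} (hΘ : DifferentiableAt ℝ Θ p)
    (hX : DifferentiableAt ℝ X p) :
    lieD S (fun q w => Θ q w) X p = lieDerivAt S Θ p (X p) := by
  simp only [lieD, lieDerivAt, lieb, fderiv_clm_apply hΘ hX, add_apply,
    ContinuousLinearMap.flip_apply, ContinuousLinearMap.comp_apply, map_sub]
  ring

lemma lieDerivAt_apply (hΘ : DifferentiableAt ℝ Θ p) (v : E n) :
    lieDerivAt S Θ p v = vfd S (fun q => Θ q v) p + Θ p (fderiv ℝ S p v) := by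
  simp [vfd, lieDerivAt, fderiv_clm_apply hΘ (differentiableAt_const v)]

lemma lieDerivAt_self_eq_zero (hΘ : DifferentiableAt ℝ Θ p) (hS : DifferentiableAt ℝ S p)
    (h : ∀ q, Θ q (S q) = 0) : lieDerivAt S Θ p (S p) = 0 := by
  rw [← lieD_eq_lieDerivAt hΘ hS]
  simp [lieD, lieb, h]

lemma forall_lieD_eq_zero_iff (hΘ : Differentiable ℝ Θ) :
    (∀ X : E n → E n, Cinf X → ∀ p, lieD S (fun q w => Θ q w) X p = 0) ↔
      ∀ p, lieDerivAt S Θ p = 0 := by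
  constructor
  · intro h p
    refine ContinuousLinearMap.ext fun v => ?_
    simpa [lieD_eq_lieDerivAt (hΘ p) (differentiableAt_const v)] using
      h (fun _ => v) contDiff_const p
  · intro h X hX p
    rw [lieD_eq_lieDerivAt (hΘ p) (hX.differentiable p), h, zero_apply]

end LieDerivative

section Semispray

variable {G : E n → Fin n → ℝ}

lemma fderiv_Ssp (hG : Cinf G) (p v : E n) :
    fderiv ℝ (Ssp G) p v = (0, v.2.2, fun i => -(2 * fderiv ℝ (fun q => G q i) p v)) := by
  have hGi : ∀ i, DifferentiableAt ℝ (fun q => G q i) p :=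
    fun i => Cinf.differentiable (contDiff_pi.mp hG i) p
  have hS : HasFDerivAt (Ssp G)
      ((0 : E n →L[ℝ] ℝ).prod ((ContinuousLinearMap.snd ℝ (Fin n → ℝ) (Fin n → ℝ)).comp
        (ContinuousLinearMap.snd ℝ ℝ _) |>.prod
        (ContinuousLinearMap.pi fun i => -((2 : ℝ) • fderiv ℝ (fun q => G q i) p)))) p :=
    (hasFDerivAt_const _ _).prodMk (((ContinuousLinearMap.snd ℝ (Fin n → ℝ) (Fin n → ℝ)).comp
        (ContinuousLinearMap.snd ℝ ℝ _)).hasFDerivAt.prodMk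
      (hasFDerivAt_pi.mpr fun i => ((hGi i).hasFDerivAt.const_mul 2).neg))
  rw [hS.fderiv]
  rfl

lemma fderiv_Ssp_pdy (hG : Cinf G) (p : E n) (k : Fin n) :
    fderiv ℝ (Ssp G) p (pdy k) = pdx k + ypart fun i => -(2 * Nc G i k p) := by
  simp [fderiv_Ssp hG, pdx, pdy, ypart, Nc]

lemma fderiv_Ssp_pdx (hG : Cinf G) (p : E n) (k : Fin n) :
    fderiv ℝ (Ssp G) p (pdx k) = ypart fun i => -(2 * fderiv ℝ (fun q => G q i) p (pdx k)) := by
  simp [fderiv_Ssp hG, pdx, ypart]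

lemma eq_frame_expansion (G : E n → Fin n → ℝ) (p v : E n) :
    v = v.1 • Ssp G p + ((∑ k, (v.2.1 k - v.1 * p.2.2 k) • pdx k)
      + ∑ k, (v.2.2 k + v.1 * (2 * G p k)) • pdy k) := by
  refine Prod.ext ?_ (Prod.ext ?_ ?_)
  · simp [Ssp, pdx, pdy, ypart, Prod.fst_sum]
  all_goals
    funext j
    simp [Ssp, pdx, pdy, ypart, Prod.fst_sum, Prod.snd_sum, Finset.sum_apply, Pi.single_apply]

lemma eq_zero_of_frame (G : E n → Fin n → ℝ) (p : E n) (L : E n →L[ℝ] ℝ)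
    (hS : L (Ssp G p) = 0) (hx : ∀ k, L (pdx k) = 0) (hy : ∀ k, L (pdy k) = 0) : L = 0 := by
  refine ContinuousLinearMap.ext fun v => ?_
  rw [eq_frame_expansion G p v]
  simp [hS, hx, hy]

end Semispray

section DualSymmetry

variable {G : E n → Fin n → ℝ} {ωt ωc : Fin n → E n → ℝ}

lemma lieDerivAt_oneForm_pdy (hG : Cinf G) (hωt : ∀ i, Cinf (ωt i)) (hωc : ∀ i, Cinf (ωc i))
    (p : E n) (k : Fin n) :
    lieDerivAt (Ssp G) (oneForm G ωt ωc) p (pdy k) = ωt k p + covd G ωc k p := by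
  rw [lieDerivAt_apply ((cinf_oneForm hG hωt hωc).differentiable p), fderiv_Ssp_pdy hG, map_add,
    oneForm_pdx, oneForm_ypart]
  have hsum : ∑ i, ωc i p * Nc G i k p + ∑ i, ωc i p * -(2 * Nc G i k p)
      = -∑ i, Nc G i k p * ωc i p := by
    rw [← Finset.sum_add_distrib, ← Finset.sum_neg_distrib]
    exact Finset.sum_congr rfl fun i _ => by ring
  simp only [oneForm_pdy, covd]
  linarith

lemma lieDerivAt_oneForm_pdx (hG : Cinf G) (hωt : ∀ i, Cinf (ωt i)) (hωc : ∀ i, Cinf (ωc i))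
    (p : E n) (k : Fin n) :
    lieDerivAt (Ssp G) (oneForm G ωt ωc) p (pdx k) =
      vfd (Ssp G) (fun q => ωt k q + covd G ωc k q) p
        - (covd G (covd G ωc) k p + ∑ j, Rjac G j k p * ωc j p) := by
  have dωt : ∀ i, DifferentiableAt ℝ (ωt i) p := fun i => (hωt i).differentiable p
  have dωc : ∀ i, DifferentiableAt ℝ (ωc i) p := fun i => (hωc i).differentiable p
  have dN : ∀ i, DifferentiableAt ℝ (Nc G i k) p := fun i => (cinf_Nc hG i k).differentiable p
  rw [lieDerivAt_apply ((cinf_oneForm hG hωt hωc).differentiable p), fderiv_Ssp_pdx hG,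
    oneForm_ypart]
  simp only [oneForm_pdx]
  rw [vfd_add (dωt k) (DifferentiableAt.fun_sum fun i _ => (dωc i).fun_mul (dN i)),
    vfd_add (dωt k) ((cinf_covd hG hωc k).differentiable p),
    vfd_sum fun i => (dωc i).fun_mul (dN i)]
  simp only [vfd_mul (dωc _) (dN _)]
  have hswap : ∑ j, Nc G j k p * ∑ m, Nc G m j p * ωc m p
      = ∑ j, (∑ m, Nc G j m p * Nc G m k p) * ωc j p := by
    simp only [Finset.mul_sum, Finset.sum_mul]
    rw [Finset.sum_comm]
    exact Finset.sum_congr rfl fun j _ => Finset.sum_congr rfl fun m _ => by ring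
  rw [show covd G (covd G ωc) k p = vfd (Ssp G) (covd G ωc k) p
      - ∑ j, Nc G j k p * (vfd (Ssp G) (ωc j) p - ∑ m, Nc G m j p * ωc m p) from rfl]
  simp only [mul_sub, Finset.sum_sub_distrib, hswap, Rjac, sub_mul, Finset.sum_add_distrib]
  ring_nf
  simp only [Finset.sum_neg_distrib, ← Finset.sum_mul, mul_comm (Nc G _ k p), mul_comm (ωc _ p)]
  ring

lemma forall_lieDerivAt_oneForm_eq_zero_iff (hG : Cinf G) (hωt : ∀ i, Cinf (ωt i))
    (hωc : ∀ i, Cinf (ωc i)) :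
    (∀ p, lieDerivAt (Ssp G) (oneForm G ωt ωc) p = 0) ↔
      (∀ k p, ωt k p + covd G ωc k p = 0) ∧
        ∀ k p, covd G (covd G ωc) k p + ∑ j, Rjac G j k p * ωc j p = 0 := by
  have hΘ := (cinf_oneForm hG hωt hωc).differentiable
  have vfd_of_eq_zero : (∀ k p, ωt k p + covd G ωc k p = 0) →
      ∀ k p, vfd (Ssp G) (fun q => ωt k q + covd G ωc k q) p = 0 := by
    intro h k p
    simp [vfd, h]
  constructor
  · intro h
    have hy : ∀ k p, ωt k p + covd G ωc k p = 0 := fun k p => by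
      rw [← lieDerivAt_oneForm_pdy hG hωt hωc, h, zero_apply]
    refine ⟨hy, fun k p => ?_⟩
    have hx := lieDerivAt_oneForm_pdx hG hωt hωc p k
    rw [h, vfd_of_eq_zero hy, zero_apply] at hx
    linarith
  · rintro ⟨hy, hx⟩ p
    refine eq_zero_of_frame G p _ ?_ (fun k => ?_) (fun k => ?_)
    · exact lieDerivAt_self_eq_zero (hΘ p) ((cinf_Ssp hG).differentiable p) oneForm_Ssp
    · rw [lieDerivAt_oneForm_pdx hG hωt hωc, vfd_of_eq_zero hy, hx, sub_zero]
    · rw [lieDerivAt_oneForm_pdy hG hωt hωc, hy]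

end DualSymmetry

theorem stmt9_general (n : ℕ) (G : E n → Fin n → ℝ) (hG : Cinf G)
    (ωt ωc : Fin n → E n → ℝ) (hωt : ∀ i, Cinf (ωt i)) (hωc : ∀ i, Cinf (ωc i)) :
    (∀ X : E n → E n, Cinf X → ∀ p : E n,
      lieD (Ssp G)
        (fun q w => (∑ i, ωt i q * dxi i q w) + ∑ i, ωc i q * dyi G i q w) X p = 0)
    ↔ ((∀ (i : Fin n) (p : E n), ωt i p = -(covd G ωc i p))
       ∧ (∀ (i : Fin n) (p : E n),
          covd G (covd G ωc) i p + ∑ j, Rjac G j i p * ωc j p = 0)) := by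
  have hω : (fun q w => (∑ i, ωt i q * dxi i q w) + ∑ i, ωc i q * dyi G i q w) =
      fun q w => oneForm G ωt ωc q w := by
    funext q w
    exact (oneForm_apply q w).symm
  rw [hω, forall_lieD_eq_zero_iff (cinf_oneForm hG hωt hωc).differentiable,
    forall_lieDerivAt_oneForm_eq_zero_iff hG hωt hωc]
  simp only [add_eq_zero_iff_eq_neg]

/-- Let `ω = Σᵢ ω̃ᵢ δxⁱ + Σᵢ ωᵢ δyⁱ` be a 1-form on `E` (so
`i_Sω = 0`).  Then `ω` is a dual symmetry of `S` (`L_Sω = 0`) if and only if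
`ω̃ᵢ = −(∇ω)ᵢ` for all `i` and the Jacobi equation `(∇∇ω)ᵢ + Σⱼ Rʲᵢ ωⱼ = 0` holds. -/
theorem stmt9 (n : ℕ) (hn : 1 ≤ n) (G : E n → Fin n → ℝ) (hG : Cinf G)
    (ωt ωc : Fin n → E n → ℝ) (hωt : ∀ i, Cinf (ωt i)) (hωc : ∀ i, Cinf (ωc i)) :
    (∀ X : E n → E n, Cinf X → ∀ p : E n,
      lieD (Ssp G)
        (fun q w => (∑ i, ωt i q * dxi i q w) + ∑ i, ωc i q * dyi G i q w) X p = 0)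
    ↔ ((∀ (i : Fin n) (p : E n), ωt i p = -(covd G ωc i p))
       ∧ (∀ (i : Fin n) (p : E n),
          covd G (covd G ωc) i p + ∑ j, Rjac G j i p * ωc j p = 0)) :=
  stmt9_general n G hG ωt ωc hωt hωc
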